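/- arXiv:2111.05975 — 3 statements merged into one kernel-verified Lean document; each statement's English description precedes it below -/
import Mathlib

section
/- A subset B of a metric space (X,d) is Bourbaki-bounded in X if and only if every sequence in B is cofinally Bourbaki-Cauchy in X. -/
open Metric Filter Set

/-- Iterated chain-ball: `chainBall x eps m` is the set of points joinable to `x`
by a chain of `m + 1` steps each of length `< eps`; `chainBall x eps 0` is the open
ball (corresponding to `B^1`), and `chainBall x eps m` corresponds to `B^(m+1)`. -/
def chainBall {X : Type*} [PseudoMetricSpace X] (x : X) (eps : Real) : Nat -> Set X
  | 0 => Metric.ball x eps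
  | m + 1 => Set.iUnion fun y : X => Set.iUnion fun _ : y ∈ chainBall x eps m => Metric.ball y eps

/-- `B` is Bourbaki-bounded in `X`. -/
def IsBourbakiBounded {X : Type*} [PseudoMetricSpace X] (B : Set X) : Prop :=
  ∀ ε > (0 : ℝ), ∃ m : ℕ, ∃ s : Finset X, B ⊆ ⋃ x ∈ s, chainBall x ε m

/-- A sequence is Bourbaki-Cauchy in `X`. -/
def BourbakiCauchySeq {X : Type*} [PseudoMetricSpace X] (u : ℕ → X) : Prop :=
  ∀ ε > (0 : ℝ), ∃ m n₀ : ℕ, ∃ p : X, ∀ n ≥ n₀, u n ∈ chainBall p ε m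

/-- A sequence is cofinally Bourbaki-Cauchy in `X`. -/
def CofinallyBourbakiCauchySeq {X : Type*} [PseudoMetricSpace X] (u : ℕ → X) : Prop :=
  ∀ ε > (0 : ℝ), ∃ m : ℕ, ∃ p : X, ∀ n : ℕ, ∃ k ≥ n, u k ∈ chainBall p ε m

/-!
If `B` is covered by finitely many `ε`-chain balls of a common depth `m`, every sequence in `B`
visits one of them infinitely often. Conversely, if `B` is not Bourbaki-bounded at some scale `ε`,
one picks inductively `uₙ ∈ B` outside the depth-`n` chain balls around all earlier terms. Two
terms `uᵢ, uₙ` (`i < n`) of a common depth-`m` chain ball around `p` are joined, through `p`, by a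
chain of depth `2m + 1`, so no chain ball can contain terms of arbitrarily large index.
-/

section ChainBall

variable {X : Type*} [PseudoMetricSpace X] {x y : X} {ε : ℝ} {m : ℕ}

lemma mem_chainBall_zero : y ∈ chainBall x ε 0 ↔ dist y x < ε := Iff.rfl

lemma mem_chainBall_succ : y ∈ chainBall x ε (m + 1) ↔ ∃ z ∈ chainBall x ε m, dist y z < ε := by
  simp [chainBall, Metric.mem_ball]

lemma chainBall_subset_succ (hε : 0 < ε) : chainBall x ε m ⊆ chainBall x ε (m + 1) :=
  fun y hy => mem_chainBall_succ.2 ⟨y, hy, by rwa [dist_self]⟩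

lemma chainBall_mono (hε : 0 < ε) (x : X) : Monotone (chainBall x ε) :=
  monotone_nat_of_le_succ fun _ => chainBall_subset_succ hε

lemma chainBall_subset_chainBall_succ_of_dist_lt (h : dist y x < ε) :
    ∀ m, chainBall y ε m ⊆ chainBall x ε (m + 1)
  | 0, _, hz => mem_chainBall_succ.2 ⟨y, h, hz⟩
  | m + 1, _, hz => by
    obtain ⟨w, hw, hzw⟩ := mem_chainBall_succ.1 hz
    exact mem_chainBall_succ.2 ⟨w, chainBall_subset_chainBall_succ_of_dist_lt h m hw, hzw⟩

lemma mem_chainBall_comm : y ∈ chainBall x ε m ↔ x ∈ chainBall y ε m := by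
  suffices ∀ {x y : X}, y ∈ chainBall x ε m → x ∈ chainBall y ε m from ⟨this, this⟩
  intro x y h
  induction m generalizing y with
  | zero => rwa [mem_chainBall_zero, dist_comm]
  | succ m ih =>
    obtain ⟨z, hz, hyz⟩ := mem_chainBall_succ.1 h
    exact chainBall_subset_chainBall_succ_of_dist_lt (by rwa [dist_comm]) m (ih hz)

lemma mem_chainBall_add_succ (hy : y ∈ chainBall x ε m) :
    ∀ {z} {n}, z ∈ chainBall y ε n → z ∈ chainBall x ε (m + n + 1)
  | _, 0, hz => mem_chainBall_succ.2 ⟨y, hy, hz⟩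
  | _, n + 1, hz => by
    obtain ⟨w, hw, hzw⟩ := mem_chainBall_succ.1 hz
    exact mem_chainBall_succ.2 ⟨w, mem_chainBall_add_succ hy hw, hzw⟩

end ChainBall

section BourbakiBounded

variable {X : Type*} [PseudoMetricSpace X] {B : Set X} {u : ℕ → X}

lemma cofinallyBourbakiCauchySeq_iff_frequently :
    CofinallyBourbakiCauchySeq u ↔
      ∀ ε > (0 : ℝ), ∃ m : ℕ, ∃ p : X, ∃ᶠ n in atTop, u n ∈ chainBall p ε m := by
  simp only [CofinallyBourbakiCauchySeq, frequently_atTop]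

lemma IsBourbakiBounded.cofinallyBourbakiCauchySeq (hB : IsBourbakiBounded B)
    (hu : ∀ n, u n ∈ B) : CofinallyBourbakiCauchySeq u := by
  refine cofinallyBourbakiCauchySeq_iff_frequently.2 fun ε hε => ?_
  obtain ⟨m, s, hs⟩ := hB ε hε
  have hcover : ∃ᶠ n in atTop, ∃ x ∈ s, u n ∈ chainBall x ε m :=
    Frequently.of_forall fun n => by simpa using hs (hu n)
  obtain ⟨p, -, hp⟩ := s.frequently_exists.1 hcover
  exact ⟨m, p, hp⟩

lemma exists_seq_forall_lt_not_mem_chainBall (hB : ¬IsBourbakiBounded B) :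
    ∃ ε > (0 : ℝ), ∃ u : ℕ → X, (∀ n, u n ∈ B) ∧
      ∀ i n, i < n → u n ∉ chainBall (u i) ε n := by
  simp only [IsBourbakiBounded, not_forall, not_exists, Set.not_subset] at hB
  obtain ⟨ε, hε, hB⟩ := hB
  classical
  -- Each term is tagged with the depth it avoids; the tags increase strictly, so the `n`-th
  -- tag is at least `n`.
  obtain ⟨f, hfB, hf⟩ := exists_seq_of_forall_finset_exists (fun q : X × ℕ => q.1 ∈ B)
    (fun q r => q.2 < r.2 ∧ r.1 ∉ chainBall q.1 ε r.2) fun s _ => by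
      obtain ⟨b, hb, hbs⟩ := hB (s.sup Prod.snd + 1) (s.image Prod.fst)
      refine ⟨(b, s.sup Prod.snd + 1), hb, fun q hq => ⟨?_, ?_⟩⟩
      · exact Nat.lt_succ_of_le (s.le_sup (f := Prod.snd) hq)
      · exact fun hbq => hbs (mem_biUnion (Finset.mem_image_of_mem _ hq) hbq)
  have hdepth : StrictMono fun n => (f n).2 := fun i n hin => (hf i n hin).1
  refine ⟨ε, hε, fun n => (f n).1, hfB, fun i n hin hmem => (hf i n hin).2 ?_⟩
  exact chainBall_mono hε _ (hdepth.id_le n) hmem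

lemma not_cofinallyBourbakiCauchySeq_of_forall_lt_not_mem_chainBall {ε : ℝ} (hε : 0 < ε)
    (hu : ∀ i n, i < n → u n ∉ chainBall (u i) ε n) : ¬CofinallyBourbakiCauchySeq u := by
  intro hcauchy
  obtain ⟨m, p, hp⟩ := hcauchy ε hε
  obtain ⟨i, -, hi⟩ := hp 0
  obtain ⟨n, hn, hn'⟩ := hp (max (i + 1) (2 * m + 1))
  have hchain : u n ∈ chainBall (u i) ε (m + m + 1) :=
    mem_chainBall_add_succ (mem_chainBall_comm.1 hi) hn'
  exact hu i n (by omega) (chainBall_mono hε _ (by omega) hchain)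

end BourbakiBounded

/-- A subset of a metric space is Bourbaki-bounded iff every sequence in it is
cofinally Bourbaki-Cauchy. -/
theorem isBourbakiBounded_iff_cofinallyBourbakiCauchy (X : Type*) [MetricSpace X]
    (B : Set X) :
    IsBourbakiBounded B ↔
      ∀ u : ℕ → X, (∀ n, u n ∈ B) → CofinallyBourbakiCauchySeq u := by
  refine ⟨fun hB _ hu => hB.cofinallyBourbakiCauchySeq hu, fun h => ?_⟩
  by_contra hB
  obtain ⟨ε, hε, u, huB, hu⟩ := exists_seq_forall_lt_not_mem_chainBall hB
  exact not_cofinallyBourbakiCauchySeq_of_forall_lt_not_mem_chainBall hε hu (h u huB)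
end

section
/- A metric space (X,d) is Bourbaki-complete if and only if it is complete and every Bourbaki-bounded subset of X is totally bounded. -/
open Metric Filter Set

/-- A metric space is (sequentially) Bourbaki-complete if every Bourbaki-Cauchy
sequence has a cluster point. -/
def IsBourbakiComplete (X : Type*) [PseudoMetricSpace X] : Prop :=
  ∀ u : ℕ → X, BourbakiCauchySeq u → ∃ x : X, MapClusterPt x atTop u

/-!
A Bourbaki-Cauchy sequence has Bourbaki-bounded range; when that range is totally bounded and
`X` is complete, its closure is compact and the sequence clusters. Conversely, Cauchy sequences
are Bourbaki-Cauchy, which gives completeness; and in a Bourbaki-bounded set every sequence has a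
Bourbaki-Cauchy subsequence (follow a nonprincipal ultrafilter on `ℕ`, which for each radius
`1 / (k + 1)` picks one of the finitely many chain-balls covering the set), hence a cluster point,
which forces total boundedness.
-/

section Bourbaki

variable {X : Type*} [PseudoMetricSpace X]

lemma chainBall_mono_s6 {x : X} {δ ε : ℝ} (h : δ ≤ ε) : ∀ m, chainBall x δ m ⊆ chainBall x ε m
  | 0 => ball_subset_ball h
  | m + 1 => by
    simp only [chainBall, iUnion_subset_iff]
    exact fun y hy => (ball_subset_ball h).trans <|
      subset_biUnion_of_mem (u := (ball · ε)) (chainBall_mono_s6 h m hy)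

lemma mem_chainBall_self {x : X} {ε : ℝ} (hε : 0 < ε) : ∀ m, x ∈ chainBall x ε m
  | 0 => mem_ball_self hε
  | m + 1 => mem_biUnion (mem_chainBall_self hε m) (mem_ball_self hε)

lemma CauchySeq.bourbakiCauchySeq {u : ℕ → X} (hu : CauchySeq u) : BourbakiCauchySeq u := by
  intro ε hε
  obtain ⟨N, hN⟩ := Metric.cauchySeq_iff'.mp hu ε hε
  exact ⟨0, N, u N, hN⟩

lemma BourbakiCauchySeq.isBourbakiBounded_range {u : ℕ → X} (hu : BourbakiCauchySeq u) :
    IsBourbakiBounded (range u) := by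
  classical
  intro ε hε
  obtain ⟨m, n₀, p, hp⟩ := hu ε hε
  refine ⟨m, insert p ((Finset.range n₀).image u), ?_⟩
  rintro _ ⟨n, rfl⟩
  rcases le_or_gt n₀ n with hn | hn
  · exact mem_biUnion (Finset.mem_insert_self _ _) (hp n hn)
  · refine mem_biUnion (Finset.mem_insert_of_mem ?_) (mem_chainBall_self hε m)
    exact Finset.mem_image_of_mem u (Finset.mem_range.mpr hn)

lemma IsBourbakiBounded.exists_bourbakiCauchySeq_subseq {B : Set X} (hB : IsBourbakiBounded B)
    {u : ℕ → X} (hu : ∀ n, u n ∈ B) : ∃ φ : ℕ → ℕ, StrictMono φ ∧ BourbakiCauchySeq (u ∘ φ) := by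
  have hcover : ∀ k : ℕ, ∃ m p,
      ∀ᶠ n in (hyperfilter ℕ : Filter ℕ), u n ∈ chainBall p (1 / (k + 1)) m := by
    intro k
    obtain ⟨m, s, hs⟩ := hB _ Nat.one_div_pos_of_nat
    have hmem : ∀ᶠ n in (hyperfilter ℕ : Filter ℕ), ∃ p ∈ (s : Set X),
        u n ∈ chainBall p (1 / (k + 1)) m :=
      Eventually.of_forall fun n => by simpa using hs (hu n)
    obtain ⟨p, -, hp⟩ := (Ultrafilter.eventually_exists_mem_iff s.finite_toSet).mp hmem
    exact ⟨m, p, hp⟩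
  choose m p hp using hcover
  have hfreq : ∀ k, ∃ᶠ n in atTop, ∀ i ∈ Iic k, u n ∈ chainBall (p i) (1 / (i + 1)) (m i) :=
    fun k => (((finite_Iic k).eventually_all).mpr fun i _ => hp i).frequently.filter_mono
      Nat.hyperfilter_le_atTop
  obtain ⟨φ, hφ, hφp⟩ := extraction_forall_of_frequently hfreq
  refine ⟨φ, hφ, fun ε hε => ?_⟩
  obtain ⟨k, hk⟩ := exists_nat_one_div_lt hε
  exact ⟨m k, k, p k, fun n hn => chainBall_mono_s6 hk.le _ (hφp n k hn)⟩

end Bourbaki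

theorem totallyBounded_of_forall_mapClusterPt {X : Type*} [UniformSpace X]
    [(uniformity X).IsCountablyGenerated] {s : Set X}
    (h : ∀ u : ℕ → X, (∀ n, u n ∈ s) → ∃ x, MapClusterPt x atTop u) : TotallyBounded s := by
  intro V hV
  contrapose! h
  obtain ⟨u, hus, hu⟩ :
      ∃ u : ℕ → X, (∀ n, u n ∈ s) ∧ ∀ n m, m < n → u m ∉ UniformSpace.ball (u n) V := by
    simp only [not_subset, mem_iUnion₂, not_exists, exists_prop] at h
    simpa only [forall_and, forall_mem_image, not_and] using! seq_of_forall_finite_exists h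
  refine ⟨u, hus, fun x hx => ?_⟩
  obtain ⟨φ, hφ, huφ⟩ := hx.tendsto_subseq
  obtain ⟨N, hN⟩ := huφ.cauchySeq.mem_entourage hV
  exact hu (φ (N + 1)) (φ N) (hφ N.lt_add_one) (hN (N + 1) N N.le_succ le_rfl)

/-- A metric space is Bourbaki-complete iff it is complete and every Bourbaki-bounded
subset is totally bounded. -/
theorem isBourbakiComplete_iff_complete_and_tb (X : Type*) [MetricSpace X] :
    IsBourbakiComplete X ↔
      CompleteSpace X ∧ ∀ B : Set X, IsBourbakiBounded B → TotallyBounded B := by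
  constructor
  · intro H
    refine ⟨Metric.complete_of_cauchySeq_tendsto fun u hu => ?_, fun B hB => ?_⟩
    · obtain ⟨x, hx⟩ := H u hu.bourbakiCauchySeq
      exact ⟨x, le_nhds_of_cauchy_adhp hu hx⟩
    · refine totallyBounded_of_forall_mapClusterPt fun u hu => ?_
      obtain ⟨φ, hφ, hcauchy⟩ := hB.exists_bourbakiCauchySeq_subseq hu
      obtain ⟨x, hx⟩ := H _ hcauchy
      exact ⟨x, hx.of_comp hφ.tendsto_atTop⟩
  · rintro ⟨hcomplete, htb⟩ u hu
    have hcompact : IsCompact (closure (range u)) :=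
      (htb _ hu.isBourbakiBounded_range).closure.isCompact_of_isClosed isClosed_closure
    obtain ⟨x, -, hx⟩ := hcompact.exists_clusterPt (f := map u atTop)
      (tendsto_principal.mpr (Eventually.of_forall fun n => subset_closure (mem_range_self n)))
    exact ⟨x, hx⟩
end

section
/- Let B be a subset of a uniform space (X,μ). Then B is totally bounded if and only if every ultrafilter containing B is a Cauchy filter, if and only if every filter containing B is cofinally Cauchy. -/
open Filter Set

/-- The star of a set `A` with respect to a family of sets. -/
def starSet {X : Type*} (U : Set (Set X)) (A : Set X) : Set X :=
  ⋃ V ∈ {V ∈ U | (V ∩ A).Nonempty}, V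

/-- Iterated star: `iterStar U A 0 = A`, `iterStar U A (m+1) = starSet U (iterStar U A m)`. -/
def iterStar {X : Type*} (U : Set (Set X)) (A : Set X) : ℕ → Set X
  | 0 => A
  | m + 1 => starSet U (iterStar U A m)

/-- A family of sets is a uniform cover of a uniform space if it is refined by the
cover of balls of some entourage. -/
def IsUniformCover {X : Type*} [UniformSpace X] (U : Set (Set X)) : Prop :=
  ∃ V ∈ uniformity X, ∀ x : X, ∃ W ∈ U, UniformSpace.ball x V ⊆ W

/-- A filter is cofinally Cauchy if for every uniform cover some member of the cover
meets every member of the filter. -/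
def CofinallyCauchyFilter {X : Type*} [UniformSpace X] (F : Filter X) : Prop :=
  ∀ U : Set (Set X), IsUniformCover U → ∃ W ∈ U, ∀ S ∈ F, (S ∩ W).Nonempty

/-- A uniform space is cofinally complete if every (proper) cofinally Cauchy filter
has a cluster point. -/
def CofinallyComplete (X : Type*) [UniformSpace X] : Prop :=
  ∀ F : Filter X, F.NeBot → CofinallyCauchyFilter F → ∃ x : X, ClusterPt x F

open UniformSpace
open scoped Uniformity

/-! A set `W` meets every member of `F` exactly when `∃ᶠ x in F, x ∈ W`. A totally
bounded `B ∈ F` is covered by finitely many balls, hence by finitely many members of any uniform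
cover, and one of them is frequently visited by `F`. Conversely, for an ultrafilter "frequently"
means "eventually", so testing the cover by `V`-balls puts a `V`-ball into the ultrafilter, which
makes it Cauchy; Mathlib's ultrafilter criterion for total boundedness then concludes. -/

section UniformCovers

variable {X : Type*} [UniformSpace X]

theorem isUniformCover_range_ball {V : SetRel X X} (hV : V ∈ 𝓤 X) :
    IsUniformCover (range fun x => ball x V) :=
  ⟨V, hV, fun x => ⟨ball x V, mem_range_self x, subset_rfl⟩⟩

theorem cofinallyCauchyFilter_iff_frequently {F : Filter X} :
    CofinallyCauchyFilter F ↔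
      ∀ U, IsUniformCover U → ∃ W ∈ U, ∃ᶠ x in F, x ∈ W := by
  simp only [CofinallyCauchyFilter, frequently_iff, inter_nonempty]

theorem TotallyBounded.cofinallyCauchyFilter {B : Set X} (hB : TotallyBounded B)
    {F : Filter X} [F.NeBot] (hBF : B ∈ F) : CofinallyCauchyFilter F := by
  rw [cofinallyCauchyFilter_iff_frequently]
  rintro U ⟨V, hV, hball⟩
  choose W hWU hballW using hball
  obtain ⟨t, ht, hBt⟩ := hB _ (symm_le_uniformity hV)
  have hBW : ∀ x ∈ B, ∃ y ∈ t, x ∈ W y := fun x hx => by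
    obtain ⟨y, hy, hxy⟩ := mem_iUnion₂.mp (hBt hx)
    exact ⟨y, hy, hballW y hxy⟩
  have : ∃ᶠ x in F, ∃ y ∈ t, x ∈ W y := (Eventually.frequently hBF).mono hBW
  obtain ⟨y, -, hy⟩ := ht.frequently_exists.mp this
  exact ⟨W y, hWU y, hy⟩

theorem cauchy_of_forall_exists_ball_mem {F : Filter X} [F.NeBot]
    (hF : ∀ V ∈ 𝓤 X, ∃ x, ball x V ∈ F) : Cauchy F := by
  refine cauchy_iff.mpr ⟨‹_›, fun s hs => ?_⟩
  obtain ⟨V, hV, _, hVs⟩ := comp_symm_mem_uniformity_sets hs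
  obtain ⟨x, hx⟩ := hF V hV
  refine ⟨ball x V, hx, ?_⟩
  rintro ⟨a, b⟩ ⟨ha, hb⟩
  exact hVs (mem_ball_comp (mem_ball_symmetry.mp ha) hb)

theorem Ultrafilter.cauchy_of_cofinallyCauchyFilter {F : Ultrafilter X}
    (hF : CofinallyCauchyFilter (F : Filter X)) : Cauchy (F : Filter X) := by
  refine cauchy_of_forall_exists_ball_mem fun V hV => ?_
  obtain ⟨_, ⟨x, rfl⟩, hx⟩ :=
    cofinallyCauchyFilter_iff_frequently.mp hF _ (isUniformCover_range_ball hV)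
  exact ⟨x, Ultrafilter.frequently_iff_eventually.mp hx⟩

theorem totallyBounded_iff_forall_ultrafilter_mem_cauchy {B : Set X} :
    TotallyBounded B ↔ ∀ F : Ultrafilter X, B ∈ F → Cauchy (F : Filter X) := by
  simp only [totallyBounded_iff_ultrafilter, le_principal_iff, Ultrafilter.mem_coe]

end UniformCovers

/-- A subset is totally bounded iff every ultrafilter containing it is Cauchy, iff
every proper filter containing it is cofinally Cauchy. -/
theorem totallyBounded_iff_filters (X : Type*) [UniformSpace X] (B : Set X) :
    (TotallyBounded B ↔
      ∀ F : Ultrafilter X, B ∈ F → Cauchy (F : Filter X)) ∧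
    (TotallyBounded B ↔
      ∀ F : Filter X, F.NeBot → B ∈ F → CofinallyCauchyFilter F) := by
  refine ⟨totallyBounded_iff_forall_ultrafilter_mem_cauchy,
    fun hB F _ hBF => hB.cofinallyCauchyFilter hBF, fun h => ?_⟩
  exact totallyBounded_iff_forall_ultrafilter_mem_cauchy.mpr fun F hBF =>
    F.cauchy_of_cofinallyCauchyFilter (h F F.neBot hBF)
end
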